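/- Fix κ ≥ 0. For every q ∈ [0,1), the integral defining B(q) = (1-q) ∫_ℝ E((κ - √q·z)/√(1-q))² φ(z) dz is finite, and the function q ↦ B(q) is continuous on [0,1). -/

import Mathlib

open MeasureTheory Real Filter

/-- The standard normal density. -/
noncomputable def gphi (u : ℝ) : ℝ := Real.exp (-u ^ 2 / 2) / Real.sqrt (2 * Real.pi)

/-- The standard normal CDF. -/
noncomputable def gPhi (u : ℝ) : ℝ := ∫ s in Set.Iic u, gphi s

/-- The standard normal tail. -/
noncomputable def gPhiBar (u : ℝ) : ℝ := 1 - gPhi u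

/-- The inverse Mills ratio. -/
noncomputable def mills (u : ℝ) : ℝ := gphi u / gPhiBar u

/-- P(r) = E[tanh²(√r Z)]. -/
noncomputable def Pfun (r : ℝ) : ℝ := ∫ z : ℝ, Real.tanh (Real.sqrt r * z) ^ 2 * gphi z

/-- B(q). -/
noncomputable def Bfun (κ q : ℝ) : ℝ :=
  (1 - q) * ∫ z : ℝ, mills ((κ - Real.sqrt q * z) / Real.sqrt (1 - q)) ^ 2 * gphi z

/-- C_κ. -/
noncomputable def Ckappa (κ : ℝ) : ℝ := ∫ z : ℝ, max (κ - z) 0 ^ 2 * gphi z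

/-- The critical capacity. -/
noncomputable def alphac (κ : ℝ) : ℝ := 2 / (Real.pi * Ckappa κ)

/-!
The inverse Mills ratio grows at most linearly, `E(u) ≤ e^{3/2} (1 + |u|)`: the tail `Φ̄(u)` is at
least the mass of the window `(u⁺, u⁺ + 1/(1 + |u|)]`, where `φ` differs from `φ(u)` by a factor
at most `e^{3/2}`. For `q ≤ b < 1` the argument of `E` is bounded in square by a multiple of
`1 + z²`, so the integrand is dominated by `C_b (1 + z²) φ(z)`, which is integrable. This gives
integrability, and continuity in `q` by dominated convergence.
-/

open Set ProbabilityTheory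

lemma gphi_eq_gaussianPDFReal : gphi = gaussianPDFReal 0 1 := by
  funext u
  simp [gphi, gaussianPDFReal, div_eq_inv_mul]

lemma gphi_pos (u : ℝ) : 0 < gphi u := by
  unfold gphi; positivity

lemma continuous_gphi : Continuous gphi := by
  unfold gphi; fun_prop

lemma integrable_gphi : Integrable gphi := by
  rw [gphi_eq_gaussianPDFReal]
  exact integrable_gaussianPDFReal 0 1

lemma integral_gphi : ∫ u, gphi u = 1 := by
  rw [gphi_eq_gaussianPDFReal]
  exact integral_gaussianPDFReal_eq_one 0 one_ne_zero

lemma integrable_one_add_sq_mul_gphi : Integrable (fun z => (1 + z ^ 2) * gphi z) := by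
  have hsq : Integrable (fun z : ℝ => z ^ 2 * gphi z) := by
    refine ((integrable_rpow_mul_exp_neg_mul_sq (by norm_num : (0:ℝ) < 1/2)
      (by norm_num : (-1:ℝ) < 2)).const_mul (√(2 * π))⁻¹).congr (ae_of_all _ fun z => ?_)
    simp only [gphi]
    norm_cast
    ring_nf
  exact (integrable_gphi.add hsq).congr (ae_of_all _ fun z => by simp only [Pi.add_apply]; ring)

lemma gphi_div_gphi (u v : ℝ) : gphi u / gphi v = exp ((v ^ 2 - u ^ 2) / 2) := by
  have hs : √(2 * π) ≠ 0 := by positivity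
  rw [gphi, gphi, div_div_div_comm, div_self hs, div_one, ← exp_sub]
  ring_nf

lemma gphi_antitoneOn : AntitoneOn gphi (Ici 0) := by
  intro s hs t _ hst
  unfold gphi
  gcongr

lemma gPhiBar_eq_integral_Ioi (u : ℝ) : gPhiBar u = ∫ s in Ioi u, gphi s := by
  rw [gPhiBar, eq_comm, eq_sub_iff_add_eq, add_comm, gPhi,
    intervalIntegral.integral_Iic_add_Ioi integrable_gphi.integrableOn
      integrable_gphi.integrableOn, integral_gphi]

lemma mul_gphi_le_gPhiBar {u a ε : ℝ} (hua : u ≤ a) (ha : 0 ≤ a) (hε : 0 ≤ ε) :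
    ε * gphi (a + ε) ≤ gPhiBar u := by
  have hwindow : ε * gphi (a + ε) ≤ ∫ s in Ioc a (a + ε), gphi s := by
    calc ε * gphi (a + ε) = ∫ _ in Ioc a (a + ε), gphi (a + ε) := by
          rw [setIntegral_const, measureReal_def, Real.volume_Ioc, add_sub_cancel_left,
            ENNReal.toReal_ofReal hε, smul_eq_mul]
      _ ≤ ∫ s in Ioc a (a + ε), gphi s :=
          setIntegral_mono_on (integrableOn_const (by simp [Real.volume_Ioc]))
            integrable_gphi.integrableOn measurableSet_Ioc fun s hs =>
              gphi_antitoneOn (mem_Ici.2 (ha.trans hs.1.le)) (mem_Ici.2 (by linarith [hs.1]))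
                hs.2
  refine hwindow.trans ?_
  rw [gPhiBar_eq_integral_Ioi]
  exact setIntegral_mono_set integrable_gphi.integrableOn
    (ae_of_all _ fun s => (gphi_pos s).le)
    (Ioc_subset_Ioi_self.trans (Ioi_subset_Ioi hua)).eventuallyLE

lemma gPhiBar_pos (u : ℝ) : 0 < gPhiBar u := by
  have h := mul_gphi_le_gPhiBar (le_max_left u 0) (le_max_right u 0) zero_le_one
  linarith [gphi_pos (max u 0 + 1)]

lemma continuous_gPhi : Continuous gPhi := by
  have h : gPhi = fun u => gPhi 0 + ∫ s in (0:ℝ)..u, gphi s := by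
    funext u
    rw [← intervalIntegral.integral_Iic_sub_Iic integrable_gphi.integrableOn
      integrable_gphi.integrableOn]
    simp [gPhi]
  rw [h]
  exact continuous_const.add (integrable_gphi.continuous_primitive 0)

lemma continuous_mills : Continuous mills :=
  continuous_gphi.div (continuous_const.sub continuous_gPhi) fun u => (gPhiBar_pos u).ne'

lemma mills_nonneg (u : ℝ) : 0 ≤ mills u :=
  div_nonneg (gphi_pos u).le (gPhiBar_pos u).le

lemma mills_le (u : ℝ) : mills u ≤ exp (3 / 2) * (1 + |u|) := by
  set a := max u 0
  set ε := 1 / (1 + |u|) with hε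
  have hu1 : 0 < 1 + |u| := by positivity
  have hε0 : 0 < ε := by positivity
  have hεu : ε * (1 + |u|) = 1 := by rw [hε]; field_simp
  have hbound : mills u ≤ gphi u / (ε * gphi (a + ε)) :=
    div_le_div_of_nonneg_left (gphi_pos u).le (mul_pos hε0 (gphi_pos _))
      (mul_gphi_le_gPhiBar (le_max_left u 0) (le_max_right u 0) hε0.le)
  have hratio : gphi u / (ε * gphi (a + ε)) = (1 + |u|) * exp (((a + ε) ^ 2 - u ^ 2) / 2) := by
    rw [div_mul_eq_div_div_swap, gphi_div_gphi, hε, div_div_eq_mul_div, div_one, mul_comm]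
  have hexp : ((a + ε) ^ 2 - u ^ 2) / 2 ≤ 3 / 2 := by
    have hε1 : ε ≤ 1 := by nlinarith [abs_nonneg u]
    rcases le_total 0 u with hu | hu
    · have ha : a = u := max_eq_left hu
      rw [abs_of_nonneg hu] at hεu
      rw [ha]
      nlinarith
    · have ha : a = 0 := max_eq_right hu
      rw [ha]
      nlinarith
  calc mills u ≤ (1 + |u|) * exp (((a + ε) ^ 2 - u ^ 2) / 2) := hratio ▸ hbound
    _ ≤ (1 + |u|) * exp (3 / 2) := by gcongr
    _ = exp (3 / 2) * (1 + |u|) := mul_comm _ _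

lemma mills_sq_le (u : ℝ) : mills u ^ 2 ≤ 2 * exp 3 * (1 + u ^ 2) := by
  have hexp : exp (3 / 2) ^ 2 = exp 3 := by rw [← exp_nat_mul]; norm_num
  calc mills u ^ 2 ≤ (exp (3 / 2) * (1 + |u|)) ^ 2 :=
        pow_le_pow_left₀ (mills_nonneg u) (mills_le u) 2
    _ = exp 3 * (1 + |u|) ^ 2 := by rw [mul_pow, hexp]
    _ ≤ 2 * exp 3 * (1 + u ^ 2) := by
        nlinarith [exp_pos 3, sq_nonneg (1 - |u|), sq_abs u]

noncomputable def Bintegrand (κ q z : ℝ) : ℝ :=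
  mills ((κ - √q * z) / √(1 - q)) ^ 2 * gphi z

lemma continuous_Bintegrand (κ q : ℝ) : Continuous (Bintegrand κ q) := by
  unfold Bintegrand
  exact ((continuous_mills.comp (by fun_prop)).pow 2).mul continuous_gphi

lemma continuousAt_Bintegrand_param (κ z : ℝ) {q₀ : ℝ} (hq₀ : q₀ < 1) :
    ContinuousAt (fun q => Bintegrand κ q z) q₀ := by
  have hden : √(1 - q₀) ≠ 0 := (sqrt_pos.2 (by linarith)).ne'
  unfold Bintegrand
  exact ((continuous_mills.continuousAt.comp (by fun_prop (disch := exact hden))).pow 2).mul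
    continuousAt_const

lemma sq_div_sqrt_one_sub_le (κ z : ℝ) {q b : ℝ} (hqb : q ≤ b) (hb : b < 1) :
    ((κ - √q * z) / √(1 - q)) ^ 2 ≤ 2 * (κ ^ 2 + 1) / (1 - b) * (1 + z ^ 2) := by
  have h1b : 0 < 1 - b := by linarith
  have hsq : √q ^ 2 ≤ 1 := by
    rw [sq_sqrt']
    exact max_le (by linarith) zero_le_one
  have hnum : (κ - √q * z) ^ 2 ≤ 2 * (κ ^ 2 + 1) * (1 + z ^ 2) := by
    nlinarith [sq_nonneg (κ + √q * z), sq_nonneg κ, sq_nonneg z,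
      mul_le_mul_of_nonneg_right hsq (sq_nonneg z)]
  rw [div_pow, sq_sqrt (by linarith), div_mul_eq_mul_div]
  calc (κ - √q * z) ^ 2 / (1 - q) ≤ 2 * (κ ^ 2 + 1) * (1 + z ^ 2) / (1 - q) :=
        div_le_div_of_nonneg_right hnum (by linarith)
    _ ≤ 2 * (κ ^ 2 + 1) * (1 + z ^ 2) / (1 - b) :=
        div_le_div_of_nonneg_left (by positivity) h1b (by linarith)

lemma norm_Bintegrand_le (κ z : ℝ) {q b : ℝ} (hqb : q ≤ b) (hb : b < 1) :
    ‖Bintegrand κ q z‖ ≤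
      2 * exp 3 * (1 + 2 * (κ ^ 2 + 1) / (1 - b)) * ((1 + z ^ 2) * gphi z) := by
  set L := 2 * (κ ^ 2 + 1) / (1 - b)
  have hL : 0 ≤ L := div_nonneg (by positivity) (by linarith)
  have harg := sq_div_sqrt_one_sub_le κ z hqb hb
  rw [Bintegrand, norm_of_nonneg (by have := gphi_pos z; positivity), ← mul_assoc]
  gcongr ?_ * _
  · exact (gphi_pos z).le
  calc _ ≤ 2 * exp 3 * (1 + L * (1 + z ^ 2)) := (mills_sq_le _).trans (by gcongr)
    _ ≤ 2 * exp 3 * (1 + L) * (1 + z ^ 2) := by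
        rw [mul_assoc _ (1 + L)]
        gcongr
        nlinarith [sq_nonneg z]

lemma integrable_Bintegrand (κ : ℝ) {q : ℝ} (hq : q < 1) : Integrable (Bintegrand κ q) :=
  (integrable_one_add_sq_mul_gphi.const_mul _).mono'
    (continuous_Bintegrand κ q).aestronglyMeasurable
    (ae_of_all _ fun z => norm_Bintegrand_le κ z le_rfl hq)

lemma continuousOn_integral_Bintegrand (κ : ℝ) :
    ContinuousOn (fun q => ∫ z, Bintegrand κ q z) (Iio 1) := by
  refine isOpen_Iio.continuousOn_iff.2 fun q₀ hq₀ => ?_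
  obtain ⟨b, hq₀b, hb⟩ := exists_between (mem_Iio.1 hq₀)
  exact continuousAt_of_dominated
    (Eventually.of_forall fun q => (continuous_Bintegrand κ q).aestronglyMeasurable)
    (eventually_of_mem (Iio_mem_nhds hq₀b) fun q hq => ae_of_all _ fun z =>
      norm_Bintegrand_le κ z hq.le hb)
    (integrable_one_add_sq_mul_gphi.const_mul _)
    (ae_of_all _ fun z => continuousAt_Bintegrand_param κ z (mem_Iio.1 hq₀))

theorem stmt_7_general (κ : ℝ) :
    (∀ q ∈ Set.Ico (0 : ℝ) 1,
      MeasureTheory.Integrable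
        (fun z : ℝ => mills ((κ - Real.sqrt q * z) / Real.sqrt (1 - q)) ^ 2 * gphi z)) ∧
    ContinuousOn (Bfun κ) (Set.Ico (0 : ℝ) 1) :=
  ⟨fun _ hq => integrable_Bintegrand κ hq.2,
    (continuousOn_const.sub continuousOn_id).mul
      ((continuousOn_integral_Bintegrand κ).mono fun _ hq => hq.2)⟩

theorem stmt_7 (κ : ℝ) (hκ : 0 ≤ κ) :
    (∀ q ∈ Set.Ico (0 : ℝ) 1,
      MeasureTheory.Integrable
        (fun z : ℝ => mills ((κ - Real.sqrt q * z) / Real.sqrt (1 - q)) ^ 2 * gphi z)) ∧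
    ContinuousOn (Bfun κ) (Set.Ico (0 : ℝ) 1) :=
  stmt_7_general κ
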